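/- The minimum weight of the dual code C_k(n,q)^⊥ satisfies d(C_k(n,q)^⊥) ≥ d(C_{k−1}(n−1,q)^⊥) for all n ≥ 2 and 0 < k ≤ n−1. -/

import Mathlib

open scoped Classical

noncomputable section

/-- The point set of `PG(n,q)`, `q = p^h`: the projectivization of `F_q^{n+1}`. -/
abbrev PGPoint (p h n : ℕ) [Fact p.Prime] :=
  Projectivization (GaloisField p h) (Fin (n+1) → GaloisField p h)

noncomputable instance (p h n : ℕ) [Fact p.Prime] : Fintype (PGPoint p h n) :=
  @Fintype.ofFinite _ (Quotient.finite _)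

/-- Incidence vector (over `F_p`) of the point set of the projective subspace
determined by a submodule `W`. -/
def incVec (p h n : ℕ) [Fact p.Prime]
    (W : Submodule (GaloisField p h) (Fin (n+1) → GaloisField p h)) :
    PGPoint p h n → ZMod p :=
  fun P => if P.submodule ≤ W then 1 else 0

/-- The `p`-ary code `C_k(n,q)` generated by the incidence vectors of the
`k`-spaces (i.e. submodules of rank `k+1`) of `PG(n,q)`. -/
def PGCode (p h n k : ℕ) [Fact p.Prime] :
    Submodule (ZMod p) (PGPoint p h n → ZMod p) :=
  Submodule.span (ZMod p)
    { c | ∃ W : Submodule (GaloisField p h) (Fin (n+1) → GaloisField p h),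
        Module.finrank (GaloisField p h) W = k + 1 ∧ c = incVec p h n W }

/-- Standard inner product of two words over `F_p`. -/
def ip {X : Type*} [Fintype X] {p : ℕ} (c d : X → ZMod p) : ZMod p :=
  ∑ x, c x * d x

/-- The dual code of a code `C`. -/
def dualCode {X : Type*} [Fintype X] {p : ℕ}
    (C : Submodule (ZMod p) (X → ZMod p)) : Submodule (ZMod p) (X → ZMod p) where
  carrier := { v | ∀ c ∈ C, ip v c = 0 }
  zero_mem' := by intro c hc; simp [ip]
  add_mem' := by
    intro a b ha hb c hc
    simp only [Set.mem_setOf_eq, ip, Pi.add_apply, add_mul, Finset.sum_add_distrib] at *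
    rw [ha c hc, hb c hc, add_zero]
  smul_mem' := by
    intro r a ha c hc
    simp only [Set.mem_setOf_eq, ip, Pi.smul_apply, smul_eq_mul, mul_assoc, ← Finset.mul_sum] at *
    rw [ha c hc, mul_zero]

/-- Hamming weight of a word. -/
def wt {X : Type*} [Fintype X] {p : ℕ} (c : X → ZMod p) : ℕ :=
  (Finset.univ.filter fun x => c x ≠ 0).card

/-- The minimum (Hamming) weight of a nonzero codeword of a code `C`. -/
def minWt {X : Type*} [Fintype X] {p : ℕ}
    (C : Submodule (ZMod p) (X → ZMod p)) : ℕ :=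
  sInf { w | ∃ c ∈ C, c ≠ 0 ∧ wt c = w }


/-!
A nonzero codeword `c` of `C_k(n,q)^⊥` of weight less than `θ_{n-1} = 1 + q + ⋯ + q^{n-1}` has a
tangent line `L` at some point `Q₀` of its support: otherwise a second support point on each of the
`θ_{n-1}` lines through `Q₀` gives too many support points. Projecting `c` from a point `P ≠ Q₀` of
`L`, i.e. summing `c` over the lines through `P`, gives a codeword of `C_{k-1}(n-1,q)^⊥` of weight
at most `wt c`, nonzero because its value at the image of `L` is `c Q₀`. Minimum-weight codewords
are that light: for `k ≥ 2` the difference of the incidence vectors of two `(n-k)`-spaces lies in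
`C_k(n,q)^⊥`, as every `k`-space meets each of them in a subspace with `1 mod p` points.
-/

open Module Finset
open scoped LinearAlgebra.Projectivization

section LinearAlgebra

variable {K V U : Type*} [Field K] [AddCommGroup V] [Module K V] [AddCommGroup U] [Module K U]

theorem Submodule.finrank_comap_of_surjective [FiniteDimensional K V] {f : V →ₗ[K] U}
    (hf : Function.Surjective f) (W : Submodule K U) :
    finrank K (W.comap f) = finrank K W + finrank K (LinearMap.ker f) := by
  rw [← LinearMap.finrank_range_add_finrank_ker (f.domRestrict (W.comap f)),
    LinearMap.range_domRestrict, Submodule.map_comap_eq_of_surjective hf,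
    LinearMap.ker_domRestrict,
    (Submodule.comapSubtypeEquivOfLe (LinearMap.ker_le_comap f)).finrank_eq]

theorem LinearMap.exists_surjective_ker_eq [FiniteDimensional K V] [FiniteDimensional K U]
    (W : Submodule K V) (h : finrank K V = finrank K U + finrank K W) :
    ∃ f : V →ₗ[K] U, Function.Surjective f ∧ LinearMap.ker f = W := by
  let e := LinearEquiv.ofFinrankEq (R := K) (V ⧸ W) U (by
    have := W.finrank_quotient_add_finrank
    omega)
  exact ⟨e.toLinearMap ∘ₗ W.mkQ, e.surjective.comp W.mkQ_surjective,
    by rw [LinearEquiv.ker_comp, W.ker_mkQ]⟩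

theorem exists_finrank_eq_not_le {r : ℕ} (h : r + 2 ≤ finrank K V) :
    ∃ S S' : Submodule K V, finrank K S = r + 1 ∧ finrank K S' = r + 1 ∧ ¬S' ≤ S := by
  obtain ⟨v, hv⟩ := exists_linearIndependent_of_le_finrank h
  refine ⟨Submodule.span K (Set.range (v ∘ Fin.castSucc)),
    Submodule.span K (Set.range (v ∘ Fin.succ)), ?_, ?_, fun hle => ?_⟩
  · rw [finrank_span_eq_card (hv.comp _ (Fin.castSucc_injective _)), Fintype.card_fin]
  · rw [finrank_span_eq_card (hv.comp _ (Fin.succ_injective _)), Fintype.card_fin]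
  · have hlast : v (Fin.last (r + 1)) ∈ Submodule.span K (Set.range (v ∘ Fin.succ)) :=
      Submodule.subset_span ⟨Fin.last r, by simp⟩
    refine hv.notMem_span_image (s := Set.range Fin.castSucc) (x := Fin.last (r + 1)) ?_ ?_
    · simp [Fin.range_castSucc]
    · rw [← Set.range_comp]
      exact hle hlast

end LinearAlgebra

theorem two_mul_geom_sum_lt {q : ℕ} (hq : 2 ≤ q) {s n : ℕ} (h : s < n) :
    2 * ∑ i ∈ range s, q ^ i < ∑ i ∈ range n, q ^ i :=
  calc 2 * ∑ i ∈ range s, q ^ i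
      < q * ∑ i ∈ range s, q ^ i + 1 := Nat.lt_succ_of_le (Nat.mul_le_mul_right _ hq)
    _ = ∑ i ∈ range (s + 1), q ^ i := geom_sum_succ.symm
    _ ≤ ∑ i ∈ range n, q ^ i := sum_le_sum_of_subset (range_subset_range.2 h)

namespace Projectivization

section Lines

variable {K V U : Type*} [Field K] [AddCommGroup V] [Module K V] [AddCommGroup U] [Module K U]

theorem submodule_le_iff_rep_mem (Q : ℙ K V) (W : Submodule K V) :
    Q.submodule ≤ W ↔ Q.rep ∈ W := by
  rw [Q.submodule_eq, Submodule.span_singleton_le_iff_mem]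

theorem eq_of_submodule_le {Q Q' : ℙ K V} (h : Q.submodule ≤ Q'.submodule) : Q = Q' :=
  submodule_injective <| Submodule.eq_of_le_of_finrank_eq h <| by
    rw [Q.finrank_submodule, Q'.finrank_submodule]

theorem eq_mk_of_mem {Q : ℙ K V} {x : V} (hx : x ≠ 0) (h : x ∈ Q.submodule) : mk K x hx = Q :=
  eq_of_submodule_le <| by rwa [submodule_mk, Submodule.span_singleton_le_iff_mem]

theorem finrank_sup_submodule {Q Q' : ℙ K V} (hne : Q ≠ Q') :
    finrank K ↥(Q.submodule ⊔ Q'.submodule) = 2 := by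
  have hlt : Q.submodule ⊓ Q'.submodule < Q.submodule :=
    inf_le_left.lt_of_ne fun h => hne (eq_of_submodule_le (inf_eq_left.1 h))
  have hinf := Submodule.finrank_lt_finrank_of_lt hlt
  have := Submodule.finrank_sup_add_finrank_inf_eq Q.submodule Q'.submodule
  rw [Q.finrank_submodule, Q'.finrank_submodule] at *
  omega

theorem sup_submodule_eq [FiniteDimensional K V] {Q Q' : ℙ K V} (hne : Q ≠ Q')
    {L : Submodule K V} (hL : finrank K L = 2) (hQ : Q.submodule ≤ L) (hQ' : Q'.submodule ≤ L) :
    Q.submodule ⊔ Q'.submodule = L :=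
  Submodule.eq_of_le_of_finrank_eq (sup_le hQ hQ') (by rw [hL, finrank_sup_submodule hne])

theorem submodule_le_comap_iff (f : V →ₗ[K] U) {Q : ℙ K V} (hQ : f Q.rep ≠ 0) (R : ℙ K U) :
    Q.submodule ≤ R.submodule.comap f ↔ mk K (f Q.rep) hQ = R := by
  rw [submodule_le_iff_rep_mem, Submodule.mem_comap]
  refine ⟨eq_mk_of_mem hQ, ?_⟩
  rintro rfl
  rw [submodule_mk]
  exact Submodule.mem_span_singleton_self _

theorem map_rep_ne_zero {f : V →ₗ[K] U} {P : ℙ K V} (hker : LinearMap.ker f = P.submodule)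
    {Q : ℙ K V} (hQ : Q ≠ P) : f Q.rep ≠ 0 := fun h =>
  hQ <| eq_of_submodule_le <| by rwa [← hker, submodule_le_iff_rep_mem]

end Lines

section Counting

variable {K V : Type*} [Field K] [AddCommGroup V] [Module K V] [Finite K] [Fintype (ℙ K V)]

theorem card_filter_submodule_le (W : Submodule K V) :
    #{Q : ℙ K V | Q.submodule ≤ W} = ∑ i ∈ range (finrank K W), Nat.card K ^ i := by
  rw [← card_of_finrank K W rfl, ← Fintype.card_subtype, ← Nat.card_eq_fintype_card]
  refine Nat.card_congr ((Equiv.ofInjective _ (map_injective W.subtype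
    W.injective_subtype)).trans (Equiv.setCongr ?_)).symm
  ext Q
  constructor
  · rintro ⟨Q', rfl⟩
    induction Q' using ind with | h v hv =>
    change (map _ _ (mk K v hv)).submodule ≤ W
    rw [map_mk, submodule_mk, Submodule.span_singleton_le_iff_mem]
    exact v.2
  · intro hQ
    replace hQ : Q.rep ∈ W := (submodule_le_iff_rep_mem Q W).1 hQ
    refine ⟨mk K ⟨Q.rep, hQ⟩ fun h => Q.rep_nonzero (congrArg Subtype.val h), ?_⟩
    rw [map_mk]
    exact Q.mk_rep

theorem card_filter_submodule_le_of_finrank_eq_two {L : Submodule K V} (hL : finrank K L = 2) :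
    #{Q : ℙ K V | Q.submodule ≤ L} = Nat.card K + 1 := by
  simp [card_filter_submodule_le, hL, Finset.sum_range_succ, add_comm]

theorem card_line_erase {Q Q' : ℙ K V} (hne : Q ≠ Q') :
    #(({R | R.submodule ≤ Q.submodule ⊔ Q'.submodule} : Finset (ℙ K V)).erase Q) = Nat.card K := by
  rw [card_erase_of_mem (by simp [le_sup_left]),
    card_filter_submodule_le_of_finrank_eq_two (finrank_sup_submodule hne), Nat.add_sub_cancel]

theorem cast_card_filter_submodule_le (p : ℕ) [CharP K p] (W : Submodule K V)
    (hW : finrank K W ≠ 0) : (#{Q : ℙ K V | Q.submodule ≤ W} : ZMod p) = 1 := by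
  have hq : (Nat.card K : ZMod p) = 0 := by
    have := Fintype.ofFinite K
    rw [ZMod.natCast_eq_zero_iff, Nat.card_eq_fintype_card, ← CharP.cast_eq_zero_iff K p]
    exact FiniteField.cast_card_eq_zero K
  obtain ⟨d, hd⟩ := Nat.exists_eq_succ_of_ne_zero hW
  rw [card_filter_submodule_le, hd, geom_sum_succ]
  push_cast
  rw [hq, zero_mul, zero_add]

theorem exists_tangent_line [FiniteDimensional K V] (S : Finset (ℙ K V)) (Q₀ : ℙ K V)
    (hS : #S < ∑ i ∈ range (finrank K V - 1), Nat.card K ^ i) :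
    ∃ L : Submodule K V, finrank K L = 2 ∧ Q₀.submodule ≤ L ∧
      ∀ Q ∈ S, Q.submodule ≤ L → Q = Q₀ := by
  by_contra! h
  have : Nonempty (ℙ K V) := ⟨Q₀⟩
  choose! g hgS hgL hgQ₀ using h
  have hline : ∀ Q ≠ Q₀, finrank K ↥(Q₀.submodule ⊔ Q.submodule) = 2 :=
    fun Q hQ => finrank_sup_submodule hQ.symm
  -- `g` picks a second point of `S` on each line through `Q₀`; `Q ↦ g (Q₀Q)` is at most `q`-to-one.
  have hcard : #(univ.erase Q₀) ≤ Nat.card K * #(S.erase Q₀) := by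
    refine card_le_mul_card_image_of_maps_to (f := fun Q => g (Q₀.submodule ⊔ Q.submodule))
      (fun Q hQ => ?_) _ (fun Y hY => ?_)
    · have hQ := ne_of_mem_erase hQ
      exact mem_erase.2 ⟨hgQ₀ _ (hline Q hQ) le_sup_left, hgS _ (hline Q hQ) le_sup_left⟩
    · rw [← card_line_erase (ne_of_mem_erase hY).symm]
      refine card_le_card fun Q hQ => ?_
      simp only [mem_filter, mem_erase, mem_univ, and_true, true_and] at hQ ⊢
      obtain ⟨hQ, rfl⟩ := hQ
      refine ⟨hQ, ?_⟩
      rw [sup_submodule_eq (ne_of_mem_erase hY).symm (hline Q hQ) le_sup_left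
        (hgL _ (hline Q hQ) le_sup_left)]
      exact le_sup_right
  have : Nontrivial V := nontrivial_of_ne _ _ Q₀.rep_nonzero
  obtain ⟨d, hd⟩ : ∃ d, finrank K V = d + 1 := Nat.exists_eq_succ_of_ne_zero finrank_pos.ne'
  rw [card_erase_of_mem (mem_univ _), card_univ, Fintype.card_eq_nat_card,
    card_of_finrank K V hd, geom_sum_succ, Nat.add_sub_cancel] at hcard
  rw [hd, Nat.add_sub_cancel] at hS
  have := Nat.le_of_mul_le_mul_left hcard Nat.card_pos
  have := card_erase_le (s := S) (a := Q₀)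
  omega

end Counting

end Projectivization

section DualCodeword

open Projectivization

variable {K V U M : Type*} [Field K] [AddCommGroup V] [Module K V] [AddCommGroup U] [Module K U]
  [AddCommMonoid M] [Fintype (ℙ K V)]

def IsDualCodeword (k : ℕ) (c : ℙ K V → M) : Prop :=
  ∀ W : Submodule K V, finrank K W = k + 1 → ∑ Q with Q.submodule ≤ W, c Q = 0

theorem IsDualCodeword.eq_zero {c : ℙ K V → M} (hc : IsDualCodeword 0 c) : c = 0 := by
  funext R
  have hR := hc R.submodule R.finrank_submodule
  rwa [show ({Q | Q.submodule ≤ R.submodule} : Finset (ℙ K V)) = {R} by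
    ext Q
    simpa using ⟨eq_of_submodule_le, fun h => h ▸ le_rfl⟩, sum_singleton] at hR

/-- Projection from the point `ker f`: when `ker f` has rank one, `f⁻¹ R` is the line joining
that point to (a preimage of) `R`. -/
def projectCodeword (f : V →ₗ[K] U) (c : ℙ K V → M) (R : ℙ K U) : M :=
  ∑ Q with Q.submodule ≤ R.submodule.comap f, c Q

variable {f : V →ₗ[K] U} {P : ℙ K V} {c : ℙ K V → M}

theorem isDualCodeword_projectCodeword [FiniteDimensional K V] [Fintype (ℙ K U)] {k : ℕ}
    (hc : IsDualCodeword (k + 1) c) (hf : Function.Surjective f)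
    (hker : LinearMap.ker f = P.submodule) (hcP : c P = 0) :
    IsDualCodeword k (projectCodeword f c) := by
  intro W hW
  have hfiber : ∀ Q : ℙ K V,
      ∑ R : ℙ K U with R.submodule ≤ W ∧ Q.submodule ≤ R.submodule.comap f, c Q
        = if Q.submodule ≤ W.comap f then c Q else 0 := by
    intro Q
    by_cases hQP : Q = P
    · subst hQP
      simp [hcP]
    have hQ := map_rep_ne_zero hker hQP
    rw [show ({R | R.submodule ≤ W ∧ Q.submodule ≤ R.submodule.comap f} : Finset (ℙ K U))
        = ({mk K (f Q.rep) hQ} : Finset (ℙ K U)).filter (·.submodule ≤ W) by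
      ext R
      simp [submodule_le_comap_iff f hQ, eq_comm, and_comm],
      sum_filter, sum_singleton, submodule_le_iff_rep_mem Q, Submodule.mem_comap, submodule_mk,
      Submodule.span_singleton_le_iff_mem]
  calc ∑ R with R.submodule ≤ W, projectCodeword f c R
      = ∑ Q, ∑ R : ℙ K U with R.submodule ≤ W ∧ Q.submodule ≤ R.submodule.comap f, c Q :=
        sum_comm' fun R Q => by simp
    _ = ∑ Q with Q.submodule ≤ W.comap f, c Q := by
        rw [sum_filter]
        exact sum_congr rfl fun Q _ => hfiber Q
    _ = 0 := hc _ <| by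
        rw [Submodule.finrank_comap_of_surjective hf, hker, finrank_submodule, hW]

theorem projectCodeword_mk_eq [FiniteDimensional K V] (hf : Function.Surjective f)
    (hker : LinearMap.ker f = P.submodule) {L : Submodule K V} (hL : finrank K L = 2)
    (hPL : P.submodule ≤ L) {Q₀ : ℙ K V} (hQ₀L : Q₀.submodule ≤ L) (hPQ₀ : P ≠ Q₀)
    (hc : ∀ Q, Q.submodule ≤ L → Q ≠ Q₀ → c Q = 0) :
    projectCodeword f c (mk K (f Q₀.rep) (map_rep_ne_zero hker hPQ₀.symm)) = c Q₀ := by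
  set R := mk K (f Q₀.rep) (map_rep_ne_zero hker hPQ₀.symm)
  have hR : R.submodule.comap f = L := by
    have hQ₀R : Q₀.submodule ≤ R.submodule.comap f := (submodule_le_comap_iff f _ R).2 rfl
    have hPR : P.submodule ≤ R.submodule.comap f := hker ▸ LinearMap.ker_le_comap f
    rw [← sup_submodule_eq hPQ₀ hL hPL hQ₀L, sup_submodule_eq hPQ₀ _ hPR hQ₀R]
    rw [Submodule.finrank_comap_of_surjective hf, hker, finrank_submodule, finrank_submodule]
  rw [projectCodeword, hR]
  exact sum_eq_single_of_mem Q₀ (by simpa using hQ₀L) fun Q hQ hQQ₀ => hc Q (by simpa using hQ) hQQ₀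

theorem wt_projectCodeword_le [Fintype (ℙ K U)] {p : ℕ} {c : ℙ K V → ZMod p}
    (hker : LinearMap.ker f = P.submodule) (hcP : c P = 0) : wt (projectCodeword f c) ≤ wt c := by
  have hsupp : ({R | projectCodeword f c R ≠ 0} : Finset (ℙ K U))
      ⊆ ({Q | c Q ≠ 0} : Finset (ℙ K V)).biUnion
          fun Q => {R | Q.submodule ≤ R.submodule.comap f} := by
    intro R hR
    obtain ⟨Q, hQ, hcQ⟩ := exists_ne_zero_of_sum_ne_zero (mem_filter.1 hR).2
    exact mem_biUnion.2 ⟨Q, by simpa using hcQ, by simpa using (mem_filter.1 hQ).2⟩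
  have hfiber : ∀ Q ∈ ({Q | c Q ≠ 0} : Finset (ℙ K V)),
      #{R : ℙ K U | Q.submodule ≤ R.submodule.comap f} ≤ 1 := by
    intro Q hQ
    have hQ := map_rep_ne_zero hker fun (h : Q = P) => (mem_filter.1 hQ).2 (by rw [h, hcP])
    refine card_le_one.2 fun R hR R' hR' => ?_
    simp only [mem_filter, mem_univ, true_and, submodule_le_comap_iff f hQ] at hR hR'
    exact hR.symm.trans hR'
  calc wt (projectCodeword f c)
      ≤ ∑ Q with c Q ≠ 0, #{R : ℙ K U | Q.submodule ≤ R.submodule.comap f} :=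
        (card_le_card hsupp).trans card_biUnion_le
    _ ≤ ∑ Q with c Q ≠ 0, 1 := sum_le_sum hfiber
    _ = wt c := by simp [wt]

theorem IsDualCodeword.exists_projection [Finite K] [FiniteDimensional K V]
    [FiniteDimensional K U] [Fintype (ℙ K U)] {p k : ℕ} {c : ℙ K V → ZMod p}
    (hc : IsDualCodeword (k + 1) c) (hc0 : c ≠ 0) (hVU : finrank K V = finrank K U + 1)
    (hwt : wt c < ∑ i ∈ range (finrank K U), Nat.card K ^ i) :
    ∃ c' : ℙ K U → ZMod p, IsDualCodeword k c' ∧ c' ≠ 0 ∧ wt c' ≤ wt c := by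
  obtain ⟨Q₀, hQ₀⟩ : ∃ Q₀, c Q₀ ≠ 0 := Function.ne_iff.1 hc0
  obtain ⟨L, hL, hQ₀L, htan⟩ :=
    exists_tangent_line {Q | c Q ≠ 0} Q₀ (by rwa [hVU, Nat.add_sub_cancel])
  have hvanish : ∀ Q, Q.submodule ≤ L → Q ≠ Q₀ → c Q = 0 := fun Q hQL hQQ₀ =>
    by_contra fun hQ => hQQ₀ (htan Q (by simpa using hQ) hQL)
  obtain ⟨P, hP, hPQ₀⟩ := exists_mem_ne (s := {Q : ℙ K V | Q.submodule ≤ L}) (by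
    rw [card_filter_submodule_le_of_finrank_eq_two hL]
    have : 1 < Nat.card K := Finite.one_lt_card
    omega) Q₀
  have hPL : P.submodule ≤ L := (mem_filter.1 hP).2
  have hcP := hvanish P hPL hPQ₀
  obtain ⟨f, hf, hker⟩ := LinearMap.exists_surjective_ker_eq (U := U) P.submodule
    (by rw [hVU, finrank_submodule])
  refine ⟨projectCodeword f c, isDualCodeword_projectCodeword hc hf hker hcP, fun h0 => hQ₀ ?_,
    wt_projectCodeword_le hker hcP⟩
  rw [← projectCodeword_mk_eq hf hker hL hPL hQ₀L hPQ₀ hvanish, h0]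
  rfl

theorem exists_isDualCodeword_ne_zero_wt_lt [Finite K] [FiniteDimensional K V] (p : ℕ)
    [Fact p.Prime] [CharP K p] {k : ℕ} (hk : 2 ≤ k) (hkV : k < finrank K V) :
    ∃ c : ℙ K V → ZMod p, IsDualCodeword k c ∧ c ≠ 0 ∧
      wt c < ∑ i ∈ range (finrank K V - 1), Nat.card K ^ i := by
  obtain ⟨S, S', hS, hS', hS'S⟩ := exists_finrank_eq_not_le (K := K) (V := V)
    (r := finrank K V - k - 1) (by omega)
  rw [Nat.sub_add_cancel (by omega)] at hS hS'
  obtain ⟨x, hxS', hxS⟩ := SetLike.not_le_iff_exists.1 hS'S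
  have hx : x ≠ 0 := fun h => hxS (h ▸ S.zero_mem)
  set c : ℙ K V → ZMod p := fun Q =>
    (if Q.submodule ≤ S then 1 else 0) - (if Q.submodule ≤ S' then 1 else 0)
  -- `W ⊓ T ≠ 0` by a rank count, so it has `1 mod p` points.
  have hsum : ∀ W T : Submodule K V, finrank K W = k + 1 → finrank K T = finrank K V - k →
      ∑ Q : ℙ K V with Q.submodule ≤ W, (if Q.submodule ≤ T then (1 : ZMod p) else 0) = 1 := by
    intro W T hW hT
    rw [sum_boole, filter_filter]
    simp_rw [← le_inf_iff]
    refine cast_card_filter_submodule_le p _ fun h0 => ?_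
    have := Submodule.finrank_sup_add_finrank_inf_eq W T
    have := (W ⊔ T).finrank_le
    omega
  refine ⟨c, fun W hW => ?_, fun h0 => ?_, ?_⟩
  · rw [sum_sub_distrib, hsum W S hW hS, hsum W S' hW hS', sub_self]
  · have := congrFun h0 (mk K x hx)
    simp [c, submodule_mk, Submodule.span_singleton_le_iff_mem, hxS, hxS'] at this
  · calc wt c ≤ #{Q : ℙ K V | Q.submodule ≤ S} + #{Q : ℙ K V | Q.submodule ≤ S'} := by
          refine (card_le_card fun Q hQ => ?_).trans (card_union_le _ _)
          by_contra hQ'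
          simp_all [c]
      _ = 2 * ∑ i ∈ range (finrank K V - k), Nat.card K ^ i := by
          rw [card_filter_submodule_le, card_filter_submodule_le, hS, hS', two_mul]
      _ < ∑ i ∈ range (finrank K V - 1), Nat.card K ^ i :=
          two_mul_geom_sum_lt Finite.one_lt_card (by omega)

end DualCodeword

theorem mem_dualCode_span_iff {X : Type*} [Fintype X] {p : ℕ} {s : Set (X → ZMod p)}
    {v : X → ZMod p} : v ∈ dualCode (Submodule.span (ZMod p) s) ↔ ∀ c ∈ s, ip v c = 0 :=
  ⟨fun hv c hc => hv c (Submodule.subset_span hc), fun h _ hc =>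
    Submodule.span_le (p := LinearMap.ker (dotProductBilin (ZMod p) (ZMod p) v)).2 h hc⟩

theorem mem_dualCode_PGCode_iff {p h n k : ℕ} [Fact p.Prime] {v : PGPoint p h n → ZMod p} :
    v ∈ dualCode (PGCode p h n k) ↔ IsDualCodeword k v := by
  have hip : ∀ W, ip v (incVec p h n W) = ∑ Q with Q.submodule ≤ W, v Q := fun W => by
    simp [ip, incVec, sum_filter]
  rw [PGCode, mem_dualCode_span_iff]
  constructor
  · intro hv W hW
    rw [← hip]
    exact hv _ ⟨W, hW, rfl⟩
  · rintro hv _ ⟨W, hW, rfl⟩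
    rw [hip]
    exact hv W hW

theorem minWt_eq_zero_of_forall_eq_zero {X : Type*} [Fintype X] {p : ℕ}
    {C : Submodule (ZMod p) (X → ZMod p)} (hC : ∀ c ∈ C, c = 0) : minWt C = 0 :=
  Nat.sInf_eq_zero.2 <| Or.inr <| Set.eq_empty_iff_forall_notMem.2
    fun _ ⟨c, hc, hc0, _⟩ => hc0 (hC c hc)

theorem minWt_le_minWt_of_wt_lt {X Y : Type*} [Fintype X] [Fintype Y] {p B : ℕ}
    {C : Submodule (ZMod p) (X → ZMod p)} {D : Submodule (ZMod p) (Y → ZMod p)}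
    (hD : ∃ d ∈ D, d ≠ 0 ∧ wt d < B)
    (hDC : ∀ d ∈ D, d ≠ 0 → wt d < B → ∃ c ∈ C, c ≠ 0 ∧ wt c ≤ wt d) :
    minWt C ≤ minWt D := by
  obtain ⟨d₀, hd₀, hd₀0, hd₀B⟩ := hD
  obtain ⟨d, hd, hd0, hdmin⟩ : minWt D ∈ {w | ∃ d ∈ D, d ≠ 0 ∧ wt d = w} :=
    Nat.sInf_mem ⟨_, d₀, hd₀, hd₀0, rfl⟩
  have hdB : wt d < B :=
    hdmin ▸ (Nat.sInf_le ⟨d₀, hd₀, hd₀0, rfl⟩ : minWt D ≤ wt d₀).trans_lt hd₀B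
  obtain ⟨c, hc, hc0, hcd⟩ := hDC d hd hd0 hdB
  calc minWt C ≤ wt c := Nat.sInf_le ⟨c, hc, hc0, rfl⟩
    _ ≤ wt d := hcd
    _ = minWt D := hdmin

theorem stmt15_general (p h n k : ℕ) [Fact p.Prime] (hkn : k ≤ n - 1) :
    minWt (dualCode (PGCode p h (n-1) (k-1))) ≤ minWt (dualCode (PGCode p h n k)) := by
  rcases le_or_gt k 1 with hk | hk
  · rw [Nat.sub_eq_zero_of_le hk, minWt_eq_zero_of_forall_eq_zero fun c hc =>
      (mem_dualCode_PGCode_iff.1 hc).eq_zero]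
    exact Nat.zero_le _
  obtain ⟨j, rfl⟩ : ∃ j, k = j + 1 := ⟨k - 1, by omega⟩
  obtain ⟨m, rfl⟩ : ∃ m, n = m + 1 := ⟨n - 1, by omega⟩
  rw [Nat.add_sub_cancel, Nat.add_sub_cancel]
  refine minWt_le_minWt_of_wt_lt (B := ∑ i ∈ range (m + 1), Nat.card (GaloisField p h) ^ i)
    ?_ fun d hd hd0 hwt => ?_
  · obtain ⟨c, hc, hc0, hwt⟩ := exists_isDualCodeword_ne_zero_wt_lt
      (V := Fin (m + 1 + 1) → GaloisField p h) p (k := j + 1) (by omega)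
      (by rw [finrank_fin_fun]; omega)
    exact ⟨c, mem_dualCode_PGCode_iff.2 hc, hc0, by simpa using hwt⟩
  · obtain ⟨c, hc, hc0, hcd⟩ := (mem_dualCode_PGCode_iff.1 hd).exists_projection
      (U := Fin (m + 1) → GaloisField p h) hd0 (by simp) (by simpa using hwt)
    exact ⟨c, mem_dualCode_PGCode_iff.2 hc, hc0, hcd⟩

/-- `d(C_k(n,q)^⊥) ≥ d(C_{k-1}(n-1,q)^⊥)` for `n ≥ 2`, `0 < k ≤ n-1`. -/
theorem stmt15 (p h n k : ℕ) [Fact p.Prime] (hh : 0 < h) (hn : 2 ≤ n)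
    (hk1 : 0 < k) (hkn : k ≤ n - 1) :
    minWt (dualCode (PGCode p h (n-1) (k-1))) ≤ minWt (dualCode (PGCode p h n k)) :=
  stmt15_general p h n k hkn
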